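/- arXiv:1912.05161 — 8 statements merged into one kernel-verified Lean document; each statement's English description precedes it below -/
import Mathlib

section
/- Let R be a commutative ring in which 3 = 0. Let a₀,…,a₆ ∈ R and let p,q,r,s ∈ R satisfy p·s − q·r = 1. For 0 ≤ i ≤ 6 let bᵢ ∈ R be the coefficient of x₁^{6−i}x₂^{i} in the binary sextic f(p·x₁ + q·x₂, r·x₁ + s·x₂), where f(x₁,x₂) = Σ_{i=0}^{6} aᵢ x₁^{6−i} x₂^{i}. Then b₁b₅ − b₂b₄ = a₁a₅ − a₂a₄. (In other words, the degree-2 invariant A = a₁a₅ − a₂a₄ of binary sextics is SL₂-invariant in characteristic 3.) -/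
open MvPolynomial

section helper
open Finsupp

section kit
lemma single_pair_eq (a b c d : ℕ) :
    (Finsupp.single (0:Fin 2) a + Finsupp.single 1 b = Finsupp.single 0 c + Finsupp.single 1 d)
      ↔ (a = c ∧ b = d) := by
  constructor
  · intro h
    exact ⟨by simpa [Finsupp.single_apply] using DFunLike.congr_fun h 0,
      by simpa [Finsupp.single_apply] using DFunLike.congr_fun h 1⟩
  · rintro ⟨rfl, rfl⟩; rfl

lemma single_eq_pair₀ (a c d : ℕ) :
    (Finsupp.single (0:Fin 2) a = Finsupp.single 0 c + Finsupp.single 1 d) ↔ (a = c ∧ 0 = d) := by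
  rw [← single_pair_eq a 0 c d, Finsupp.single_zero, add_zero]

lemma single_eq_pair₁ (b c d : ℕ) :
    (Finsupp.single (1:Fin 2) b = Finsupp.single 0 c + Finsupp.single 1 d) ↔ (0 = c ∧ b = d) := by
  rw [← single_pair_eq 0 b c d, Finsupp.single_zero, zero_add]

lemma zero_eq_pair (c d : ℕ) :
    ((0 : Fin 2 →₀ ℕ) = Finsupp.single 0 c + Finsupp.single 1 d) ↔ (0 = c ∧ 0 = d) := by
  rw [← single_pair_eq 0 0 c d, Finsupp.single_zero, Finsupp.single_zero, zero_add]

lemma single_pair_add (a b c d : ℕ) :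
    (Finsupp.single (0:Fin 2) a + Finsupp.single 1 b) + (Finsupp.single 0 c + Finsupp.single 1 d)
      = Finsupp.single 0 (a+c) + Finsupp.single 1 (b+d) := by
  rw [Finsupp.single_add, Finsupp.single_add]; abel

lemma add₀₀ (a c : ℕ) : Finsupp.single (0:Fin 2) a + Finsupp.single 0 c = Finsupp.single 0 (a+c) :=
  (Finsupp.single_add 0 a c).symm
lemma add₁₁ (b d : ℕ) : Finsupp.single (1:Fin 2) b + Finsupp.single 1 d = Finsupp.single 1 (b+d) :=
  (Finsupp.single_add 1 b d).symm
lemma add₁₀ (b c : ℕ) : Finsupp.single (1:Fin 2) b + Finsupp.single 0 c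
    = Finsupp.single 0 c + Finsupp.single 1 b := add_comm _ _
lemma pair_add₀ (a b c : ℕ) :
    (Finsupp.single (0:Fin 2) a + Finsupp.single 1 b) + Finsupp.single 0 c
      = Finsupp.single 0 (a+c) + Finsupp.single 1 b := by
  rw [Finsupp.single_add]; abel
lemma pair_add₁ (a b d : ℕ) :
    (Finsupp.single (0:Fin 2) a + Finsupp.single 1 b) + Finsupp.single 1 d
      = Finsupp.single 0 a + Finsupp.single 1 (b+d) := by
  rw [Finsupp.single_add]; abel
lemma add₀_pair (c a b : ℕ) :
    Finsupp.single (0:Fin 2) c + (Finsupp.single 0 a + Finsupp.single 1 b)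
      = Finsupp.single 0 (c+a) + Finsupp.single 1 b := by
  rw [Finsupp.single_add]; abel
lemma add₁_pair (d a b : ℕ) :
    Finsupp.single (1:Fin 2) d + (Finsupp.single 0 a + Finsupp.single 1 b)
      = Finsupp.single 0 a + Finsupp.single 1 (d+b) := by
  rw [Finsupp.single_add]; abel

lemma lin_pow {R : Type*} [CommRing R] (p q : R) (n : ℕ) :
    ((C p * X 0 + C q * X 1 : MvPolynomial (Fin 2) R)) ^ n
      = ∑ i ∈ Finset.range (n+1),
          monomial (Finsupp.single 0 i + Finsupp.single 1 (n-i))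
            ((n.choose i : R) * p^i * q^(n-i)) := by
  rw [add_pow]
  apply Finset.sum_congr rfl
  intro i hi
  rw [mul_pow, mul_pow, ← C_pow, ← C_pow, X_pow_eq_monomial, X_pow_eq_monomial,
    C_mul_monomial, C_mul_monomial, monomial_mul, ← C_eq_coe_nat,
    mul_comm _ ((C (n.choose i : R)) : MvPolynomial (Fin 2) R), C_mul_monomial]
  ring_nf
end kit

lemma coeff_term {R : Type*} [CommRing R] (c p q r s : R) (m n j k : ℕ) :
    MvPolynomial.coeff (Finsupp.single (0:Fin 2) j + Finsupp.single 1 k)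
      (C c * (C p * X 0 + C q * X 1)^m * (C r * X 0 + C s * X 1)^n)
    = ∑ i ∈ Finset.range (m+1), ∑ l ∈ Finset.range (n+1),
        (if i + l = j ∧ (m-i)+(n-l) = k then
          c * (m.choose i : R) * (n.choose l : R) * p^i * q^(m-i) * r^l * s^(n-l) else 0) := by
  rw [mul_assoc, lin_pow, lin_pow, Finset.sum_mul_sum, Finset.mul_sum, coeff_sum]
  apply Finset.sum_congr rfl
  intro i _
  rw [Finset.mul_sum, coeff_sum]
  apply Finset.sum_congr rfl
  intro l _
  rw [monomial_mul, single_pair_add, C_mul_monomial, coeff_monomial]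
  simp only [single_pair_eq]
  split_ifs with h
  · ring
  · rfl

end helper

set_option maxHeartbeats 16000000 in
/-- The degree-2 invariant `A = a₁a₅ − a₂a₄` of binary sextics is `SL₂`-invariant
in characteristic 3. -/
theorem invariant_A_sl2_invariant_char3
    (R : Type*) [CommRing R] (h3 : (3 : R) = 0)
    (a b : Fin 7 → R) (p q r s : R) (hdet : p * s - q * r = 1)
    (hb : ∀ i : Fin 7,
      b i = MvPolynomial.coeff
        (Finsupp.single (0 : Fin 2) (6 - (i : ℕ)) + Finsupp.single (1 : Fin 2) (i : ℕ))
        (MvPolynomial.bind₁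
          ![C p * X 0 + C q * X 1, C r * X 0 + C s * X 1]
          (∑ i : Fin 7, C (a i) * X (0 : Fin 2) ^ (6 - (i : ℕ)) * X 1 ^ (i : ℕ)))) :
    b 1 * b 5 - b 2 * b 4 = a 1 * a 5 - a 2 * a 4 := by
  have hb1 : b 1 = ((6:R)*r^5*s*a 6 + q*r^5*a 5 + (5:R)*p*r^4*s*a 5 + (2:R)*p*q*r^4*a 4 + (4:R)*p^2*r^3*s*a 4 + (3:R)*p^2*q*r^3*a 3 + (3:R)*p^3*r^2*s*a 3 + (4:R)*p^3*q*r^2*a 2 + (2:R)*p^4*r*s*a 2 + (5:R)*p^4*q*r*a 1 + p^5*s*a 1 + (6:R)*p^5*q*a 0) := by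
    rw [hb 1]
    simp only [Fin.sum_univ_seven, map_add, map_mul, map_pow, bind₁_X_right,
      bind₁_C_right, Matrix.cons_val_zero, Matrix.cons_val_one, Matrix.head_cons, Fin.val_zero, Fin.val_one,
      show ((2:Fin 7):ℕ) = 2 from rfl, show ((3:Fin 7):ℕ) = 3 from rfl,
      show ((4:Fin 7):ℕ) = 4 from rfl, show ((5:Fin 7):ℕ) = 5 from rfl,
      show ((6:Fin 7):ℕ) = 6 from rfl, add_zero, Fin.isValue, map_zero, Nat.reduceAdd, Nat.reduceSub]
    simp only [coeff_add, coeff_term, coeff_zero]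
    norm_num [Finset.sum_range_succ, Finset.sum_range_zero, Nat.choose]
    ring
  have hb2 : b 2 = ((15:R)*r^4*s^2*a 6 + (5:R)*q*r^4*s*a 5 + q^2*r^4*a 4 + (10:R)*p*r^3*s^2*a 5 + (8:R)*p*q*r^3*s*a 4 + (3:R)*p*q^2*r^3*a 3 + (6:R)*p^2*r^2*s^2*a 4 + (9:R)*p^2*q*r^2*s*a 3 + (6:R)*p^2*q^2*r^2*a 2 + (3:R)*p^3*r*s^2*a 3 + (8:R)*p^3*q*r*s*a 2 + (10:R)*p^3*q^2*r*a 1 + p^4*s^2*a 2 + (5:R)*p^4*q*s*a 1 + (15:R)*p^4*q^2*a 0) := by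
    rw [hb 2]
    simp only [Fin.sum_univ_seven, map_add, map_mul, map_pow, bind₁_X_right,
      bind₁_C_right, Matrix.cons_val_zero, Matrix.cons_val_one, Matrix.head_cons, Fin.val_zero, Fin.val_one,
      show ((2:Fin 7):ℕ) = 2 from rfl, show ((3:Fin 7):ℕ) = 3 from rfl,
      show ((4:Fin 7):ℕ) = 4 from rfl, show ((5:Fin 7):ℕ) = 5 from rfl,
      show ((6:Fin 7):ℕ) = 6 from rfl, add_zero, Fin.isValue, map_zero, Nat.reduceAdd, Nat.reduceSub]
    simp only [coeff_add, coeff_term, coeff_zero]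
    norm_num [Finset.sum_range_succ, Finset.sum_range_zero, Nat.choose]
    ring
  have hb4 : b 4 = ((15:R)*r^2*s^4*a 6 + (10:R)*q*r^2*s^3*a 5 + (6:R)*q^2*r^2*s^2*a 4 + (3:R)*q^3*r^2*s*a 3 + q^4*r^2*a 2 + (5:R)*p*r*s^4*a 5 + (8:R)*p*q*r*s^3*a 4 + (9:R)*p*q^2*r*s^2*a 3 + (8:R)*p*q^3*r*s*a 2 + (5:R)*p*q^4*r*a 1 + p^2*s^4*a 4 + (3:R)*p^2*q*s^3*a 3 + (6:R)*p^2*q^2*s^2*a 2 + (10:R)*p^2*q^3*s*a 1 + (15:R)*p^2*q^4*a 0) := by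
    rw [hb 4]
    simp only [Fin.sum_univ_seven, map_add, map_mul, map_pow, bind₁_X_right,
      bind₁_C_right, Matrix.cons_val_zero, Matrix.cons_val_one, Matrix.head_cons, Fin.val_zero, Fin.val_one,
      show ((2:Fin 7):ℕ) = 2 from rfl, show ((3:Fin 7):ℕ) = 3 from rfl,
      show ((4:Fin 7):ℕ) = 4 from rfl, show ((5:Fin 7):ℕ) = 5 from rfl,
      show ((6:Fin 7):ℕ) = 6 from rfl, add_zero, Fin.isValue, map_zero, Nat.reduceAdd, Nat.reduceSub]
    simp only [coeff_add, coeff_term, coeff_zero]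
    norm_num [Finset.sum_range_succ, Finset.sum_range_zero, Nat.choose]
    ring
  have hb5 : b 5 = ((6:R)*r*s^5*a 6 + (5:R)*q*r*s^4*a 5 + (4:R)*q^2*r*s^3*a 4 + (3:R)*q^3*r*s^2*a 3 + (2:R)*q^4*r*s*a 2 + q^5*r*a 1 + p*s^5*a 5 + (2:R)*p*q*s^4*a 4 + (3:R)*p*q^2*s^3*a 3 + (4:R)*p*q^3*s^2*a 2 + (5:R)*p*q^4*s*a 1 + (6:R)*p*q^5*a 0) := by
    rw [hb 5]
    simp only [Fin.sum_univ_seven, map_add, map_mul, map_pow, bind₁_X_right,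
      bind₁_C_right, Matrix.cons_val_zero, Matrix.cons_val_one, Matrix.head_cons, Fin.val_zero, Fin.val_one,
      show ((2:Fin 7):ℕ) = 2 from rfl, show ((3:Fin 7):ℕ) = 3 from rfl,
      show ((4:Fin 7):ℕ) = 4 from rfl, show ((5:Fin 7):ℕ) = 5 from rfl,
      show ((6:Fin 7):ℕ) = 6 from rfl, add_zero, Fin.isValue, map_zero, Nat.reduceAdd, Nat.reduceSub]
    simp only [coeff_add, coeff_term, coeff_zero]
    norm_num [Finset.sum_range_succ, Finset.sum_range_zero, Nat.choose]
    ring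
  rw [hb1, hb2, hb4, hb5]
  linear_combination (-a 2*a 4 + a 1*a 5 + q*r*a 2*a 4 - q*r*a 1*a 5 - q^2*r^2*a 2*a 4 + q^2*r^2*a 1*a 5 + q^3*r^3*a 2*a 4 - q^3*r^3*a 1*a 5 - q^4*r^4*a 2*a 4 + q^4*r^4*a 1*a 5 + q^5*r^5*a 2*a 4 - q^5*r^5*a 1*a 5 - p*s*a 2*a 4 + p*s*a 1*a 5 + (2:R)*p*q*r*s*a 2*a 4 + ((-2:R))*p*q*r*s*a 1*a 5 + ((-3:R))*p*q^2*r^2*s*a 2*a 4 + (3:R)*p*q^2*r^2*s*a 1*a 5 + (4:R)*p*q^3*r^3*s*a 2*a 4 + ((-4:R))*p*q^3*r^3*s*a 1*a 5 + ((-5:R))*p*q^4*r^4*s*a 2*a 4 + (5:R)*p*q^4*r^4*s*a 1*a 5 - p^2*s^2*a 2*a 4 + p^2*s^2*a 1*a 5 + (3:R)*p^2*q*r*s^2*a 2*a 4 + ((-3:R))*p^2*q*r*s^2*a 1*a 5 + ((-6:R))*p^2*q^2*r^2*s^2*a 2*a 4 + (6:R)*p^2*q^2*r^2*s^2*a 1*a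 5 + (10:R)*p^2*q^3*r^3*s^2*a 2*a 4 + ((-10:R))*p^2*q^3*r^3*s^2*a 1*a 5 - p^3*s^3*a 2*a 4 + p^3*s^3*a 1*a 5 + (4:R)*p^3*q*r*s^3*a 2*a 4 + ((-4:R))*p^3*q*r*s^3*a 1*a 5 + ((-10:R))*p^3*q^2*r^2*s^3*a 2*a 4 + (10:R)*p^3*q^2*r^2*s^3*a 1*a 5 - p^4*s^4*a 2*a 4 + p^4*s^4*a 1*a 5 + (5:R)*p^4*q*r*s^4*a 2*a 4 + ((-5:R))*p^4*q*r*s^4*a 1*a 5 - p^5*s^5*a 2*a 4 + p^5*s^5*a 1*a 5) * hdet + (((-63:R))*r^6*s^6*a 6^2 + ((-63:R))*q*r^6*s^5*a 5*a 6 + ((-15:R))*q^2*r^6*s^4*a 5^2 + ((-27:R))*q^2*r^6*s^4*a 4*a 6 + ((-12:R))*q^3*r^6*s^3*a 4*a 5 + ((-9:R))*q^3*r^6*s^3*a 3*a 6 + ((-2:R))*q^4*r^6*s^2*a 4^2 + ((-4:R))*q^4*r^6*s^2*a 3*a 5 - q^4*r^6*s^2*a 2*a 6 - q^5*r^6*s*a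 3*a 4 - q^5*r^6*s*a 2*a 5 + (2:R)*q^5*r^6*s*a 1*a 6 + ((-63:R))*p*r^5*s^6*a 5*a 6 + ((-33:R))*p*q*r^5*s^5*a 5^2 + ((-72:R))*p*q*r^5*s^5*a 4*a 6 + ((-51:R))*p*q^2*r^5*s^4*a 4*a 5 + ((-54:R))*p*q^2*r^5*s^4*a 3*a 6 + ((-16:R))*p*q^3*r^5*s^3*a 4^2 + ((-29:R))*p*q^3*r^5*s^3*a 3*a 5 + ((-32:R))*p*q^3*r^5*s^3*a 2*a 6 + ((-15:R))*p*q^4*r^5*s^2*a 3*a 4 + ((-12:R))*p*q^4*r^5*s^2*a 2*a 5 + ((-15:R))*p*q^4*r^5*s^2*a 1*a 6 + ((-3:R))*p*q^5*r^5*s*a 3^2 + ((-6:R))*p*q^5*r^5*s*a 2*a 4 + ((-3:R))*p*q^5*r^5*s*a 1*a 5 + (12:R)*p*q^5*r^5*s*a 0*a 6 - p*q^6*r^5*a 2*a 3 - p*q^6*r^5*a 1*a 4 + (2:R)*p*q^6*r^5*a 0*a 5 + ((-15:R))*p^2*r^4*s^6*a 5^2 + ((-27:R))*p^2*r^4*s^6*a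 4*a 6 + ((-51:R))*p^2*q*r^4*s^5*a 4*a 5 + ((-54:R))*p^2*q*r^4*s^5*a 3*a 6 + ((-27:R))*p^2*q^2*r^4*s^4*a 4^2 + ((-60:R))*p^2*q^2*r^4*s^4*a 3*a 5 + ((-60:R))*p^2*q^2*r^4*s^4*a 2*a 6 + ((-47:R))*p^2*q^3*r^4*s^3*a 3*a 4 + ((-50:R))*p^2*q^3*r^4*s^3*a 2*a 5 + ((-50:R))*p^2*q^3*r^4*s^3*a 1*a 6 + ((-15:R))*p^2*q^4*r^4*s^2*a 3^2 + ((-27:R))*p^2*q^4*r^4*s^2*a 2*a 4 + ((-30:R))*p^2*q^4*r^4*s^2*a 1*a 5 + ((-75:R))*p^2*q^4*r^4*s^2*a 0*a 6 + ((-15:R))*p^2*q^5*r^4*s*a 2*a 3 + ((-12:R))*p^2*q^5*r^4*s*a 1*a 4 + ((-15:R))*p^2*q^5*r^4*s*a 0*a 5 + ((-2:R))*p^2*q^6*r^4*a 2^2 + ((-4:R))*p^2*q^6*r^4*a 1*a 3 - p^2*q^6*r^4*a 0*a 4 + ((-12:R))*p^3*r^3*s^6*a 4*a 5 + ((-9:R))*p^3*r^3*s^6*a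 3*a 6 + ((-16:R))*p^3*q*r^3*s^5*a 4^2 + ((-29:R))*p^3*q*r^3*s^5*a 3*a 5 + ((-32:R))*p^3*q*r^3*s^5*a 2*a 6 + ((-47:R))*p^3*q^2*r^3*s^4*a 3*a 4 + ((-50:R))*p^3*q^2*r^3*s^4*a 2*a 5 + ((-50:R))*p^3*q^2*r^3*s^4*a 1*a 6 + ((-27:R))*p^3*q^3*r^3*s^3*a 3^2 + ((-60:R))*p^3*q^3*r^3*s^3*a 2*a 4 + ((-60:R))*p^3*q^3*r^3*s^3*a 1*a 5 + ((-47:R))*p^3*q^4*r^3*s^2*a 2*a 3 + ((-50:R))*p^3*q^4*r^3*s^2*a 1*a 4 + ((-50:R))*p^3*q^4*r^3*s^2*a 0*a 5 + ((-16:R))*p^3*q^5*r^3*s*a 2^2 + ((-29:R))*p^3*q^5*r^3*s*a 1*a 3 + ((-32:R))*p^3*q^5*r^3*s*a 0*a 4 + ((-12:R))*p^3*q^6*r^3*a 1*a 2 + ((-9:R))*p^3*q^6*r^3*a 0*a 3 + ((-2:R))*p^4*r^2*s^6*a 4^2 + ((-4:R))*p^4*r^2*s^6*a 3*a 5 - p^4*r^2*s^6*a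 2*a 6 + ((-15:R))*p^4*q*r^2*s^5*a 3*a 4 + ((-12:R))*p^4*q*r^2*s^5*a 2*a 5 + ((-15:R))*p^4*q*r^2*s^5*a 1*a 6 + ((-15:R))*p^4*q^2*r^2*s^4*a 3^2 + ((-27:R))*p^4*q^2*r^2*s^4*a 2*a 4 + ((-30:R))*p^4*q^2*r^2*s^4*a 1*a 5 + ((-75:R))*p^4*q^2*r^2*s^4*a 0*a 6 + ((-47:R))*p^4*q^3*r^2*s^3*a 2*a 3 + ((-50:R))*p^4*q^3*r^2*s^3*a 1*a 4 + ((-50:R))*p^4*q^3*r^2*s^3*a 0*a 5 + ((-27:R))*p^4*q^4*r^2*s^2*a 2^2 + ((-60:R))*p^4*q^4*r^2*s^2*a 1*a 3 + ((-60:R))*p^4*q^4*r^2*s^2*a 0*a 4 + ((-51:R))*p^4*q^5*r^2*s*a 1*a 2 + ((-54:R))*p^4*q^5*r^2*s*a 0*a 3 + ((-15:R))*p^4*q^6*r^2*a 1^2 + ((-27:R))*p^4*q^6*r^2*a 0*a 2 - p^5*r*s^6*a 3*a 4 - p^5*r*s^6*a 2*a 5 + (2:R)*p^5*r*s^6*a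 1*a 6 + ((-3:R))*p^5*q*r*s^5*a 3^2 + ((-6:R))*p^5*q*r*s^5*a 2*a 4 + ((-3:R))*p^5*q*r*s^5*a 1*a 5 + (12:R)*p^5*q*r*s^5*a 0*a 6 + ((-15:R))*p^5*q^2*r*s^4*a 2*a 3 + ((-12:R))*p^5*q^2*r*s^4*a 1*a 4 + ((-15:R))*p^5*q^2*r*s^4*a 0*a 5 + ((-16:R))*p^5*q^3*r*s^3*a 2^2 + ((-29:R))*p^5*q^3*r*s^3*a 1*a 3 + ((-32:R))*p^5*q^3*r*s^3*a 0*a 4 + ((-51:R))*p^5*q^4*r*s^2*a 1*a 2 + ((-54:R))*p^5*q^4*r*s^2*a 0*a 3 + ((-33:R))*p^5*q^5*r*s*a 1^2 + ((-72:R))*p^5*q^5*r*s*a 0*a 2 + ((-63:R))*p^5*q^6*r*a 0*a 1 - p^6*q*s^5*a 2*a 3 - p^6*q*s^5*a 1*a 4 + (2:R)*p^6*q*s^5*a 0*a 5 + ((-2:R))*p^6*q^2*s^4*a 2^2 + ((-4:R))*p^6*q^2*s^4*a 1*a 3 - p^6*q^2*s^4*a 0*a 4 + ((-12:R))*p^6*q^3*s^3*a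 1*a 2 + ((-9:R))*p^6*q^3*s^3*a 0*a 3 + ((-15:R))*p^6*q^4*s^2*a 1^2 + ((-27:R))*p^6*q^4*s^2*a 0*a 2 + ((-63:R))*p^6*q^5*s*a 0*a 1 + ((-63:R))*p^6*q^6*a 0^2) * h3
end

section
/- In the polynomial ring (ZMod 3)[a₀,…,a₆] (i.e., MvPolynomial (Fin 7) (ZMod 3)), the polynomial A = a₁a₅ − a₂a₄ does not divide the polynomial B = 2a₀a₁a₅a₆ + a₀a₂a₄a₆ + 2a₀a₂a₅² + 2a₀a₄³ + 2a₁²a₄a₆ + 2a₁a₂a₄a₅ + a₁a₃²a₅ + a₁a₃a₄² + 2a₂³a₆ + a₂²a₃a₅ + a₂²a₄² + 2a₂a₃²a₄. -/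
open MvPolynomial

theorem MvPolynomial.not_dvd_of_eval_eq_zero_of_eval_ne_zero {σ R : Type*} [CommSemiring R]
    {p q : MvPolynomial σ R} (x : σ → R) (hp : eval x p = 0) (hq : eval x q ≠ 0) : ¬ p ∣ q :=
  fun h => hq (zero_dvd_iff.mp (hp ▸ map_dvd (eval x) h))

/-- In `(ZMod 3)[a₀,…,a₆]`, the degree-2 invariant `A = a₁a₅ − a₂a₄` does not divide the
degree-4 invariant `B` of binary sextics. -/
theorem invariant_A_not_dvd_invariant_B :
    ¬ ((X 1 * X 5 - X 2 * X 4 : MvPolynomial (Fin 7) (ZMod 3)) ∣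
        (2 * X 0 * X 1 * X 5 * X 6 + X 0 * X 2 * X 4 * X 6 + 2 * X 0 * X 2 * X 5 ^ 2
          + 2 * X 0 * X 4 ^ 3 + 2 * X 1 ^ 2 * X 4 * X 6 + 2 * X 1 * X 2 * X 4 * X 5
          + X 1 * X 3 ^ 2 * X 5 + X 1 * X 3 * X 4 ^ 2 + 2 * X 2 ^ 3 * X 6
          + X 2 ^ 2 * X 3 * X 5 + X 2 ^ 2 * X 4 ^ 2 + 2 * X 2 * X 3 ^ 2 * X 4 :
          MvPolynomial (Fin 7) (ZMod 3))) := by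
  -- At `a₁ = a₃ = a₄ = 1`, other `aᵢ = 0`, `A` vanishes and only the monomial `a₁a₃a₄²` of `B`
  -- survives.
  apply not_dvd_of_eval_eq_zero_of_eval_ne_zero ![0, 1, 0, 1, 1, 0, 0] <;>
    simp only [map_add, map_sub, map_mul, map_pow, map_ofNat, eval_X] <;> decide
end

section
/- In the polynomial ring (ZMod 3)[a₀,…,a₆] (i.e., MvPolynomial (Fin 7) (ZMod 3)), the two polynomials A = a₁a₅ − a₂a₄ and B = 2a₀a₁a₅a₆ + a₀a₂a₄a₆ + 2a₀a₂a₅² + 2a₀a₄³ + 2a₁²a₄a₆ + 2a₁a₂a₄a₅ + a₁a₃²a₅ + a₁a₃a₄² + 2a₂³a₆ + a₂²a₃a₅ + a₂²a₄² + 2a₂a₃²a₄ are algebraically independent over ZMod 3. -/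
open MvPolynomial

/-- In `(ZMod 3)[a₀,…,a₆]`, the invariants `A = a₁a₅ − a₂a₄` and `B` of binary sextics
are algebraically independent over `ZMod 3`. -/
theorem invariants_A_B_algebraicIndependent :
    AlgebraicIndependent (ZMod 3)
      ![(X 1 * X 5 - X 2 * X 4 : MvPolynomial (Fin 7) (ZMod 3)),
        (2 * X 0 * X 1 * X 5 * X 6 + X 0 * X 2 * X 4 * X 6 + 2 * X 0 * X 2 * X 5 ^ 2
          + 2 * X 0 * X 4 ^ 3 + 2 * X 1 ^ 2 * X 4 * X 6 + 2 * X 1 * X 2 * X 4 * X 5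
          + X 1 * X 3 ^ 2 * X 5 + X 1 * X 3 * X 4 ^ 2 + 2 * X 2 ^ 3 * X 6
          + X 2 ^ 2 * X 3 * X 5 + X 2 ^ 2 * X 4 ^ 2 + 2 * X 2 * X 3 ^ 2 * X 4 :
          MvPolynomial (Fin 7) (ZMod 3))] := by
  rw [algebraicIndependent_iff_injective_aeval]
  -- specialization a₂ = 1, a₄ = X 0, a₆ = X 1, rest 0
  set g : MvPolynomial (Fin 7) (ZMod 3) →ₐ[ZMod 3] MvPolynomial (Fin 2) (ZMod 3) :=
    aeval ![0, 0, 1, 0, X 0, 0, X 1] with hg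
  -- the resulting involution of the 2-variable ring
  set σ : MvPolynomial (Fin 2) (ZMod 3) →ₐ[ZMod 3] MvPolynomial (Fin 2) (ZMod 3) :=
    aeval ![2 * X 0, 2 * X 1 + X 0 ^ 2] with hσ
  have key : (σ.comp (g.comp (aeval
      ![(X 1 * X 5 - X 2 * X 4 : MvPolynomial (Fin 7) (ZMod 3)),
        (2 * X 0 * X 1 * X 5 * X 6 + X 0 * X 2 * X 4 * X 6 + 2 * X 0 * X 2 * X 5 ^ 2
          + 2 * X 0 * X 4 ^ 3 + 2 * X 1 ^ 2 * X 4 * X 6 + 2 * X 1 * X 2 * X 4 * X 5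
          + X 1 * X 3 ^ 2 * X 5 + X 1 * X 3 * X 4 ^ 2 + 2 * X 2 ^ 3 * X 6
          + X 2 ^ 2 * X 3 * X 5 + X 2 ^ 2 * X 4 ^ 2 + 2 * X 2 * X 3 ^ 2 * X 4 :
          MvPolynomial (Fin 7) (ZMod 3))]))) = AlgHom.id _ _ := by
    apply MvPolynomial.algHom_ext
    intro i
    have h3 : (3 : MvPolynomial (Fin 2) (ZMod 3)) = 0 := by
      exact_mod_cast CharP.cast_eq_zero (MvPolynomial (Fin 2) (ZMod 3)) 3
    have e6 : (![0, 0, 1, 0, X 0, 0, X 1] : Fin 7 → MvPolynomial (Fin 2) (ZMod 3)) 6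
        = X 1 := rfl
    fin_cases i <;>
      · simp [hg, hσ, map_ofNat, Matrix.cons_val_succ, e6]
        first
        | linear_combination (-X 0 : MvPolynomial (Fin 2) (ZMod 3)) * h3
        | linear_combination (2 * X 0 ^ 2 + X 1 : MvPolynomial (Fin 2) (ZMod 3)) * h3
  intro p q hpq
  have h2 : ∀ r, σ (g ((aeval _) r)) = r := fun r => congrArg (fun φ => φ r) key
  calc p = σ (g ((aeval _) p)) := (h2 p).symm
    _ = σ (g ((aeval _) q)) := by rw [hpq]
    _ = q := h2 q
end

section
/- For k ∈ ℕ let r(k) denote the number of 5-tuples (a,b,c,d,e) ∈ ℕ⁵ with 2a + 10b + 12c + 14d + 36e = k and d ≤ 2. Let c(k) = ⌊k/12⌋ + 1. Then for every even k ≥ 10 with k mod 12 ≠ 0 and k mod 12 ≠ 2 one has r(k) − r(k−10) = c(k)·(c(k)+1)/2. -/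
/-!
Split the solutions of `2a + 10b + 12c + 14d + 36e = k` according to whether `b = 0`. Those with
`b ≥ 1` correspond to the solutions for `k - 10` by lowering `b`, so `r k - r (k - 10)` counts the
solutions with `b = 0`. For even `k` these are the triples `(c, d ≤ 2, e)` with
`12c + 14d + 36e ≤ k`, `a` being determined. Writing `y = d + 3e` (so `d = y % 3`) the weight is
`12 (c + y) + 2d`, and since `2d ≤ 4 ≤ k % 12` the constraint says exactly `c + y ≤ k / 12`;
there are `(q + 1)(q + 2) / 2` pairs with `c + y ≤ q`.
-/

open Finset

namespace RDifference

def solutions (k : ℕ) : Finset (ℕ × ℕ × ℕ × ℕ × ℕ) :=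
  (range (k + 1) ×ˢ range (k + 1) ×ˢ range (k + 1) ×ˢ range (k + 1) ×ˢ range (k + 1)).filter
    fun v => 2 * v.1 + 10 * v.2.1 + 12 * v.2.2.1 + 14 * v.2.2.2.1 + 36 * v.2.2.2.2 = k ∧
      v.2.2.2.1 ≤ 2

@[simp]
lemma mem_solutions {k a b c d e : ℕ} :
    (a, b, c, d, e) ∈ solutions k ↔ 2 * a + 10 * b + 12 * c + 14 * d + 36 * e = k ∧ d ≤ 2 := by
  simp only [solutions, mem_filter, mem_product, mem_range]
  omega

lemma natCard_eq_card_solutions (k : ℕ) :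
    Nat.card {v : ℕ × ℕ × ℕ × ℕ × ℕ //
      2 * v.1 + 10 * v.2.1 + 12 * v.2.2.1 + 14 * v.2.2.2.1 + 36 * v.2.2.2.2 = k ∧
      v.2.2.2.1 ≤ 2} = (solutions k).card := by
  rw [← Nat.card_eq_finsetCard]
  exact Nat.card_congr <| Equiv.subtypeEquivRight fun ⟨_, _, _, _, _⟩ => mem_solutions.symm

lemma card_solutions_eq_add (k : ℕ) (hk : 10 ≤ k) :
    (solutions k).card =
      (solutions (k - 10)).card + ((solutions k).filter fun v => v.2.1 = 0).card := by
  have shift : ((solutions k).filter fun v => v.2.1 ≠ 0).card = (solutions (k - 10)).card := by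
    apply card_nbij' (fun v => (v.1, v.2.1 - 1, v.2.2)) (fun v => (v.1, v.2.1 + 1, v.2.2))
    · rintro ⟨a, b, c, d, e⟩
      simp only [mem_coe, mem_filter, mem_solutions]
      omega
    · rintro ⟨a, b, c, d, e⟩
      simp only [mem_coe, mem_filter, mem_solutions]
      omega
    · rintro ⟨a, b, c, d, e⟩ hv
      simp only [mem_coe, mem_filter] at hv
      simp only [Prod.mk.injEq, true_and, and_true]
      omega
    · rintro ⟨a, b, c, d, e⟩ -
      simp
  rw [← shift, add_comm]
  exact (card_filter_add_card_filter_not _).symm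

def triangle (q : ℕ) : Finset (ℕ × ℕ) :=
  (range (q + 1) ×ˢ range (q + 1)).filter fun p => p.1 + p.2 ≤ q

@[simp]
lemma mem_triangle {q : ℕ} {p : ℕ × ℕ} : p ∈ triangle q ↔ p.1 + p.2 ≤ q := by
  simp only [triangle, mem_filter, mem_product, mem_range]
  omega

lemma two_mul_card_triangle (q : ℕ) : 2 * (triangle q).card = (q + 1) * (q + 2) := by
  induction q with
  | zero => decide
  | succ n ih =>
    have hunion : triangle (n + 1) = triangle n ∪ antidiagonal (n + 1) := by
      ext p
      simp only [mem_union, mem_triangle, HasAntidiagonal.mem_antidiagonal]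
      omega
    have hdisj : Disjoint (triangle n) (antidiagonal (n + 1)) := by
      rw [disjoint_left]
      intro p
      simp only [mem_triangle, HasAntidiagonal.mem_antidiagonal]
      omega
    rw [hunion, card_union_of_disjoint hdisj, Nat.card_antidiagonal, mul_add, ih]
    ring

lemma weight_le_iff {k c d e : ℕ} (hk : 4 ≤ k % 12) (hd : d ≤ 2) :
    12 * c + 14 * d + 36 * e ≤ k ↔ c + (d + 3 * e) ≤ k / 12 := by
  omega

lemma card_solutions_filter_eq_card_triangle (k : ℕ) (hk : Even k) (hk4 : 4 ≤ k % 12) :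
    ((solutions k).filter fun v => v.2.1 = 0).card = (triangle (k / 12)).card := by
  have hk2 : k % 2 = 0 := Nat.even_iff.mp hk
  apply card_nbij' (fun v => (v.2.2.1, v.2.2.2.1 + 3 * v.2.2.2.2))
    (fun p => ((k - (12 * p.1 + 14 * (p.2 % 3) + 36 * (p.2 / 3))) / 2, 0, p.1, p.2 % 3, p.2 / 3))
  · rintro ⟨a, b, c, d, e⟩
    simp only [mem_coe, mem_filter, mem_solutions, mem_triangle]
    rintro ⟨⟨hsum, hd⟩, -⟩
    exact (weight_le_iff hk4 hd).mp (by omega)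
  · rintro ⟨c, y⟩
    simp only [mem_coe, mem_filter, mem_solutions, mem_triangle, and_true]
    intro hy
    have hle := (weight_le_iff (c := c) (d := y % 3) (e := y / 3) hk4 (by omega)).mpr (by omega)
    omega
  · rintro ⟨a, b, c, d, e⟩ hv
    simp only [mem_coe, mem_filter, mem_solutions] at hv
    simp only [Prod.mk.injEq, true_and]
    omega
  · rintro ⟨c, y⟩ -
    simp only [Prod.mk.injEq, true_and]
    omega

end RDifference

open RDifference in
/-- For `r(k) = #{(a,b,c,d,e) ∈ ℕ⁵ : 2a + 10b + 12c + 14d + 36e = k, d ≤ 2}` and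
`c(k) = ⌊k/12⌋ + 1`, for every even `k ≥ 10` with `k mod 12 ∉ {0, 2}` one has
`r(k) − r(k−10) = c(k)(c(k)+1)/2`. -/
theorem r_difference_formula
    (r : ℕ → ℕ)
    (hr : ∀ k, r k = Nat.card {v : ℕ × ℕ × ℕ × ℕ × ℕ //
      2 * v.1 + 10 * v.2.1 + 12 * v.2.2.1 + 14 * v.2.2.2.1 + 36 * v.2.2.2.2 = k ∧
      v.2.2.2.1 ≤ 2})
    (c : ℕ → ℕ) (hc : ∀ k, c k = k / 12 + 1)
    (k : ℕ) (hk : Even k) (hk10 : 10 ≤ k) (h0 : k % 12 ≠ 0) (h2 : k % 12 ≠ 2) :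
    r k - r (k - 10) = c k * (c k + 1) / 2 := by
  have hk4 : 4 ≤ k % 12 := by
    have := Nat.even_iff.mp hk
    omega
  rw [hr, hr, natCard_eq_card_solutions, natCard_eq_card_solutions,
    card_solutions_eq_add k hk10, card_solutions_filter_eq_card_triangle k hk hk4, hc,
    Nat.add_sub_cancel_left, ← two_mul_card_triangle, Nat.mul_div_cancel_left _ two_pos]
end

section
/- In the polynomial ring (ZMod 3)[X₀,X₁,X₂,X₃,X₄] (i.e., MvPolynomial (Fin 5) (ZMod 3)), the polynomial P = X₀³X₄ − X₁³X₂ − X₀²X₁X₃² + X₃³ is a prime element (equivalently, irreducible, so that the ideal it generates is prime and the quotient ring is an integral domain). -/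
/-!
`P = X₀³ · X₄ + g` is linear in `X₄`, with `g = X₃³ − X₁³X₂ − X₀²X₁X₃²` free of `X₄`.
Such a polynomial is irreducible as soon as its two coefficients `X₀³` and `g` are relatively
prime, and since `X₀` is prime this only asks that `X₀ ∤ g`, which is seen by evaluating at
`X₃ = 1`, all other variables `0`.
Irreducible elements of the factorial ring `𝔽₃[X₀, …, X₄]` are prime.
-/

open MvPolynomial

namespace MvPolynomial

theorem eval_eq_zero_of_X_dvd {σ R : Type*} [CommSemiring R] {i : σ} {p : MvPolynomial σ R}
    (h : X i ∣ p) {x : σ → R} (hx : x i = 0) : eval x p = 0 := by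
  obtain ⟨q, rfl⟩ := h
  simp [hx]

theorem last_notMem_vars_rename_castSucc {n : ℕ} {R : Type*} [CommSemiring R]
    (p : MvPolynomial (Fin n) R) : Fin.last n ∉ (rename Fin.castSucc p).vars := by
  classical
  intro h
  obtain ⟨i, -, hi⟩ := Finset.mem_image.mp (vars_rename _ _ h)
  exact (Fin.castSucc_lt_last i).ne hi

end MvPolynomial

/-- The defining relation `P = X₀³X₄ − X₁³X₂ − X₀²X₁X₃² + X₃³` of the ring of even-weight
Siegel modular forms of degree 2 in characteristic 3 is a prime element of
`(ZMod 3)[X₀,…,X₄]`. -/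
theorem relation_P_prime :
    Prime (X 0 ^ 3 * X 4 - X 1 ^ 3 * X 2 - X 0 ^ 2 * X 1 * X 3 ^ 2 + X 3 ^ 3 :
      MvPolynomial (Fin 5) (ZMod 3)) := by
  set g : MvPolynomial (Fin 5) (ZMod 3) :=
    rename Fin.castSucc (X 3 ^ 3 - X 1 ^ 3 * X 2 - X 0 ^ 2 * X 1 * X 3 ^ 2)
  have hP : X 0 ^ 3 * X 4 - X 1 ^ 3 * X 2 - X 0 ^ 2 * X 1 * X 3 ^ 2 + X 3 ^ 3 =
      X 0 ^ 3 * X 4 + g := by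
    simp [g]
    ring
  have hX0g : ¬ X 0 ∣ g := fun h ↦ by
    simpa [g] using eval_eq_zero_of_X_dvd h (x := Pi.single 3 1) rfl
  rw [hP]
  refine (irreducible_mul_X_add _ g 4 (pow_ne_zero _ (X_ne_zero 0)) ?_ ?_ ?_).prime
  · exact fun h ↦ by simpa using vars_pow _ _ h
  · exact last_notMem_vars_rename_castSucc _
  · exact (X_prime.irreducible.isRelPrime_iff_not_dvd.mpr hX0g).pow_left
end

section
/- Assign the weights 2, 10, 12, 14, 36 to the variables X₀, X₁, X₂, X₃, X₄ of MvPolynomial (Fin 5) (ZMod 3), let P = X₀³X₄ − X₁³X₂ − X₀²X₁X₃² + X₃³ (which is weighted homogeneous of weight 42), and let Q = MvPolynomial (Fin 5) (ZMod 3) ⧸ Ideal.span {P}. Then for every k ∈ ℕ, the image in Q of the submodule of weighted-homogeneous polynomials of weighted degree k has dimension r(k) over ZMod 3, where r(k) = #{(a,b,c,d,e) ∈ ℕ⁵ : 2a + 10b + 12c + 14d + 36e = k and d ≤ 2}. -/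
/-!
Since `P` is nonzero and weighted homogeneous of weight 42 in a domain, the weight-`k` part of the
ideal `(P)` is `P` times the weight-`(k - 42)` part of the polynomial ring, so the weight-`k` part
of the quotient has dimension `N(k) - N(k - 42)`, where `N(k)` counts the monomials of weight `k`.
Multiplication by `X₃³`, of weight 42, maps the monomials of weight `k - 42` bijectively onto those
of weight `k` with `X₃`-exponent at least 3, so this difference counts the monomials of weight `k`
with `X₃`-exponent at most 2.
-/

open MvPolynomial Finsupp

theorem Submodule.finrank_map_add_finrank_inf_ker {K V W : Type*} [DivisionRing K]
    [AddCommGroup V] [Module K V] [AddCommGroup W] [Module K W] (f : V →ₗ[K] W)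
    (p : Submodule K V) [FiniteDimensional K p] :
    Module.finrank K (p.map f) + Module.finrank K (p ⊓ LinearMap.ker f : Submodule K V) =
      Module.finrank K p := by
  rw [← (f.domRestrict p).finrank_range_add_finrank_ker, LinearMap.range_domRestrict,
    LinearMap.ker_domRestrict, ← (Submodule.comapSubtypeEquivOfLe inf_le_left).finrank_eq,
    Submodule.comap_inf, Submodule.comap_subtype_self, top_inf_eq]

theorem Ideal.Quotient.ker_toLinearMap_mkₐ {R A : Type*} [CommSemiring R] [CommRing A]
    [Algebra R A] (I : Ideal A) :
    LinearMap.ker (Ideal.Quotient.mkₐ R I).toLinearMap = I.restrictScalars R := by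
  ext
  exact Ideal.Quotient.eq_zero_iff_mem

namespace Finsupp

variable {σ : Type*} {w : σ → ℕ} {i : σ} {m : ℕ}

theorem weight_tsub_single_add {d : σ →₀ ℕ} (h : m ≤ d i) :
    weight w (d - single i m) + m * w i = weight w d := by
  rw [← smul_eq_mul, ← weight_single, ← map_add, tsub_add_cancel_of_le (single_le_iff.mpr h)]

theorem natCard_weight_eq_of_lt {n : ℕ} (h : n < m * w i) :
    Nat.card {d : σ →₀ ℕ // weight w d = n} =
      Nat.card {d : σ →₀ ℕ // weight w d = n ∧ d i < m} :=
  Nat.card_congr <| Equiv.subtypeEquivRight fun d =>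
    ⟨fun hd => ⟨hd, not_le.mp fun hi => by have := weight_tsub_single_add (w := w) hi; omega⟩,
      And.left⟩

theorem natCard_weight_eq_mul_add [Finite σ] (hw : ∀ i, w i ≠ 0) (i : σ) (m j : ℕ) :
    Nat.card {d : σ →₀ ℕ // weight w d = m * w i + j} =
      Nat.card {d : σ →₀ ℕ // weight w d = m * w i + j ∧ d i < m} +
        Nat.card {d : σ →₀ ℕ // weight w d = j} := by
  have : Finite {d : σ →₀ ℕ // weight w d = m * w i + j ∧ d i < m} :=
    ((finite_of_nat_weight_eq w hw _).subset fun _ hd => hd.1).to_subtype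
  have : Finite {d : σ →₀ ℕ // weight w d = j} := (finite_of_nat_weight_eq w hw j).to_subtype
  let shift : {d : {d : σ →₀ ℕ // weight w d = m * w i + j} // ¬d.1 i < m} ≃
      {d : σ →₀ ℕ // weight w d = j} :=
    { toFun d := ⟨d.1.1 - single i m, by
        have := weight_tsub_single_add (w := w) (not_lt.mp d.2); have := d.1.2; omega⟩
      invFun d := ⟨⟨d.1 + single i m, by rw [map_add, weight_single, d.2, smul_eq_mul, add_comm]⟩,
        by simp⟩
      left_inv d := by ext1; ext1; exact tsub_add_cancel_of_le (single_le_iff.mpr (not_lt.mp d.2))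
      right_inv d := by ext1; exact add_tsub_cancel_right _ _ }
  rw [Nat.card_congr ((Equiv.sumCompl fun d => d.1 i < m).symm.trans
    ((Equiv.subtypeSubtypeEquivSubtypeInter _ (fun d : σ →₀ ℕ => d i < m)).sumCongr shift)),
    Nat.card_sum]

end Finsupp

namespace MvPolynomial

variable {σ : Type*} {w : σ → ℕ}

section CommSemiring

variable {R : Type*} [CommSemiring R] {P : MvPolynomial σ R} {a : ℕ}

attribute [local instance] weightedGradedAlgebra

theorem IsWeightedHomogeneous.weightedHomogeneousComponent_mul_of_lt
    (hP : P.IsWeightedHomogeneous w a) {n : ℕ} (h : n < a) (g : MvPolynomial σ R) :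
    weightedHomogeneousComponent w n (P * g) = 0 := by
  rw [← weightedDecomposition.decompose'_apply]
  exact DirectSum.coe_decompose_mul_of_left_mem_of_not_le _ hP (not_le.mpr h)

theorem IsWeightedHomogeneous.weightedHomogeneousComponent_add_mul
    (hP : P.IsWeightedHomogeneous w a) (j : ℕ) (g : MvPolynomial σ R) :
    weightedHomogeneousComponent w (a + j) (P * g) = P * weightedHomogeneousComponent w j g := by
  have h := DirectSum.coe_decompose_mul_of_left_mem_of_le (weightedHomogeneousSubmodule R w)
    (b := g) (n := a + j) hP (Nat.le_add_right a j)
  rw [Nat.add_sub_cancel_left] at h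
  rwa [← weightedDecomposition.decompose'_apply,
    ← weightedDecomposition.decompose'_apply (R := R) (w := w) g]

theorem IsWeightedHomogeneous.span_singleton_inf_weightedHomogeneousSubmodule_add
    (hP : P.IsWeightedHomogeneous w a) (j : ℕ) :
    (Ideal.span {P}).restrictScalars R ⊓ weightedHomogeneousSubmodule R w (a + j) =
      (weightedHomogeneousSubmodule R w j).map (LinearMap.mulLeft R P) := by
  ext q
  simp only [Submodule.mem_inf, Submodule.restrictScalars_mem, Ideal.mem_span_singleton',
    Submodule.mem_map, LinearMap.mulLeft_apply, mem_weightedHomogeneousSubmodule]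
  constructor
  · rintro ⟨⟨c, rfl⟩, hq⟩
    refine ⟨weightedHomogeneousComponent w j c, weightedHomogeneousComponent_mem w c j, ?_⟩
    rw [← hP.weightedHomogeneousComponent_add_mul, mul_comm, hq.weightedHomogeneousComponent_same]
  · rintro ⟨g, hg, rfl⟩
    exact ⟨⟨g, mul_comm g P⟩, hP.mul hg⟩

theorem IsWeightedHomogeneous.span_singleton_inf_weightedHomogeneousSubmodule_of_lt
    (hP : P.IsWeightedHomogeneous w a) {n : ℕ} (h : n < a) :
    (Ideal.span {P}).restrictScalars R ⊓ weightedHomogeneousSubmodule R w n = ⊥ := by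
  refine eq_bot_iff.mpr fun q ⟨hqP, hq⟩ => ?_
  obtain ⟨c, rfl⟩ := Ideal.mem_span_singleton'.mp hqP
  rw [Submodule.mem_bot, ← IsWeightedHomogeneous.weightedHomogeneousComponent_same hq, mul_comm,
    hP.weightedHomogeneousComponent_mul_of_lt h]

end CommSemiring

section CommRing

variable {R : Type*} [CommRing R]

theorem finite_weightedHomogeneousSubmodule [Finite σ] (hw : ∀ i, w i ≠ 0) (n : ℕ) :
    Module.Finite R (weightedHomogeneousSubmodule R w n) :=
  Module.Finite.iff_fg.mpr (weightedHomogeneousSubmodule_fg R w hw n)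

theorem finrank_weightedHomogeneousSubmodule [Nontrivial R] (n : ℕ) :
    Module.finrank R (weightedHomogeneousSubmodule R w n) =
      Nat.card {d : σ →₀ ℕ // weight w d = n} := by
  rw [weightedHomogeneousSubmodule_eq_finsupp_supported]
  exact Module.finrank_eq_nat_card_basis (basisRestrictSupport R {d | weight w d = n})

end CommRing

variable {K : Type*} [Field K] [Finite σ] {P : MvPolynomial σ K} {a : ℕ}

theorem finrank_map_mk_weightedHomogeneousSubmodule_add (hw : ∀ i, w i ≠ 0)
    (hP : P.IsWeightedHomogeneous w a) (hP0 : P ≠ 0) (j : ℕ) :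
    Module.finrank K ((weightedHomogeneousSubmodule K w (a + j)).map
        (Ideal.Quotient.mkₐ K (Ideal.span {P})).toLinearMap) +
      Module.finrank K (weightedHomogeneousSubmodule K w j) =
      Module.finrank K (weightedHomogeneousSubmodule K w (a + j)) := by
  have := finite_weightedHomogeneousSubmodule (R := K) hw (a + j)
  rw [← Submodule.finrank_map_add_finrank_inf_ker
      (Ideal.Quotient.mkₐ K (Ideal.span {P})).toLinearMap (weightedHomogeneousSubmodule K w (a + j)),
    Ideal.Quotient.ker_toLinearMap_mkₐ, inf_comm,
    hP.span_singleton_inf_weightedHomogeneousSubmodule_add,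
    (Submodule.equivMapOfInjective (LinearMap.mulLeft K P) (mul_right_injective₀ hP0)
      _).finrank_eq]

theorem finrank_map_mk_weightedHomogeneousSubmodule_of_lt (hw : ∀ i, w i ≠ 0)
    (hP : P.IsWeightedHomogeneous w a) {n : ℕ} (h : n < a) :
    Module.finrank K ((weightedHomogeneousSubmodule K w n).map
        (Ideal.Quotient.mkₐ K (Ideal.span {P})).toLinearMap) =
      Module.finrank K (weightedHomogeneousSubmodule K w n) := by
  have := finite_weightedHomogeneousSubmodule (R := K) hw n
  rw [← Submodule.finrank_map_add_finrank_inf_ker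
      (Ideal.Quotient.mkₐ K (Ideal.span {P})).toLinearMap (weightedHomogeneousSubmodule K w n),
    Ideal.Quotient.ker_toLinearMap_mkₐ, inf_comm,
    hP.span_singleton_inf_weightedHomogeneousSubmodule_of_lt h, finrank_bot, add_zero]

end MvPolynomial

noncomputable def finsuppFinFiveEquiv : (Fin 5 →₀ ℕ) ≃ ℕ × ℕ × ℕ × ℕ × ℕ where
  toFun d := (d 0, d 1, d 2, d 3, d 4)
  invFun v := equivFunOnFinite.symm ![v.1, v.2.1, v.2.2.1, v.2.2.2.1, v.2.2.2.2]
  left_inv d := by ext i; fin_cases i <;> rfl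
  right_inv _ := rfl

theorem natCard_weight_eq_and_lt_three (k : ℕ) :
    Nat.card {d : Fin 5 →₀ ℕ // weight ![2, 10, 12, 14, 36] d = k ∧ d 3 < 3} =
      Nat.card {v : ℕ × ℕ × ℕ × ℕ × ℕ //
        2 * v.1 + 10 * v.2.1 + 12 * v.2.2.1 + 14 * v.2.2.2.1 + 36 * v.2.2.2.2 = k ∧
          v.2.2.2.1 ≤ 2} :=
  Nat.card_congr <| finsuppFinFiveEquiv.subtypeEquiv fun d => by
    change _ ↔ 2 * d 0 + 10 * d 1 + 12 * d 2 + 14 * d 3 + 36 * d 4 = k ∧ d 3 ≤ 2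
    simp only [weight_eq_sum, Fin.sum_univ_five, smul_eq_mul, Matrix.cons_val_zero,
      Matrix.cons_val_one, Matrix.cons_val]
    omega

/-- With weights `(2,10,12,14,36)` on the variables of `(ZMod 3)[X₀,…,X₄]`, the relation
`P = X₀³X₄ − X₁³X₂ − X₀²X₁X₃² + X₃³` is weighted homogeneous of weight 42, and for every
`k` the image in `Q = (ZMod 3)[X₀,…,X₄] ⧸ (P)` of the weighted-homogeneous part of weight
`k` has dimension `r(k) = #{(a,b,c,d,e) ∈ ℕ⁵ : 2a+10b+12c+14d+36e = k, d ≤ 2}`. -/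
theorem quotient_graded_dimension
    (w : Fin 5 → ℕ) (hw : w = ![2, 10, 12, 14, 36])
    (P : MvPolynomial (Fin 5) (ZMod 3))
    (hP : P = X 0 ^ 3 * X 4 - X 1 ^ 3 * X 2 - X 0 ^ 2 * X 1 * X 3 ^ 2 + X 3 ^ 3)
    (r : ℕ → ℕ)
    (hr : ∀ k, r k = Nat.card {v : ℕ × ℕ × ℕ × ℕ × ℕ //
      2 * v.1 + 10 * v.2.1 + 12 * v.2.2.1 + 14 * v.2.2.2.1 + 36 * v.2.2.2.2 = k ∧
      v.2.2.2.1 ≤ 2}) :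
    P.IsWeightedHomogeneous w 42 ∧
    ∀ k : ℕ,
      Module.finrank (ZMod 3)
        (Submodule.map (Ideal.Quotient.mkₐ (ZMod 3) (Ideal.span {P})).toLinearMap
          (weightedHomogeneousSubmodule (ZMod 3) w k)) = r k := by
  subst hw
  have hw : ∀ i, ![2, 10, 12, 14, 36] i ≠ 0 := by decide
  have hX (i : Fin 5) := isWeightedHomogeneous_X (ZMod 3) ![2, 10, 12, 14, 36] i
  have hhom : P.IsWeightedHomogeneous ![2, 10, 12, 14, 36] 42 := hP ▸
    ((((hX 0).pow 3).mul (hX 4)).sub (((hX 1).pow 3).mul (hX 2)) |>.sub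
      ((((hX 0).pow 2).mul (hX 1)).mul ((hX 3).pow 2))).add ((hX 3).pow 3)
  have hP0 : P ≠ 0 := fun h => by simpa [hP] using congrArg (eval ![0, 0, 0, 1, 0]) h
  refine ⟨hhom, fun k => ?_⟩
  rw [hr, ← natCard_weight_eq_and_lt_three]
  obtain hk | ⟨j, rfl⟩ : k < 42 ∨ ∃ j, k = 42 + j :=
    (lt_or_ge k 42).imp_right Nat.exists_eq_add_of_le
  · rw [finrank_map_mk_weightedHomogeneousSubmodule_of_lt hw hhom hk,
      finrank_weightedHomogeneousSubmodule]
    exact natCard_weight_eq_of_lt (i := 3) (m := 3) hk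
  · have hsplit := natCard_weight_eq_mul_add hw 3 3 j
    have := finrank_map_mk_weightedHomogeneousSubmodule_add hw hhom hP0 j
    rw [show 3 * ![2, 10, 12, 14, 36] 3 = 42 from rfl] at hsplit
    rw [finrank_weightedHomogeneousSubmodule, finrank_weightedHomogeneousSubmodule, hsplit] at this
    exact Nat.add_right_cancel this
end

section
/- Work in S = MvPolynomial (Fin 4) (ZMod 3) with variables A, B, C, D. Let φ : MvPolynomial (Fin 5) (ZMod 3) → S be the (ZMod 3)-algebra homomorphism determined by X₀ ↦ A, X₁ ↦ D, X₂ ↦ B³ + A³C − A²B², X₃ ↦ B·D, X₄ ↦ C·D³. Then the kernel of φ is the principal ideal generated by P = X₀³X₄ − X₁³X₂ − X₀²X₁X₃² + X₃³. -/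
/-!
The relation `P` is linear in `X₄` with leading coefficient `X₀³`, and its constant term does not
vanish at `X₀ = 0`; since `X₀` is prime, the two coefficients are coprime, so `P` is irreducible,
hence prime in the factorial ring `R[X₀, …, X₄]`.

After inverting `D = φ(X₁)`, the map `φ` has a one-sided inverse modulo `P`: sending
`A ↦ X₀`, `B ↦ X₃ / X₁`, `C ↦ X₄ / X₁³`, `D ↦ X₁` defines a ring map `ψ` from `S` to the
localization `(R[X₀, …, X₄] ⧸ (P))[X₁⁻¹]` with `ψ ∘ φ` the canonical map; the only nontrivial
generator is `X₂`, where the relation `P = 0` is used to solve for `X₂`. Hence every element of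
`ker φ` is killed by a power of `X₁` modulo `P`, and since `P` is prime and does not divide `X₁`,
it lies in `(P)`.
-/

open MvPolynomial

theorem MvPolynomial.prime_rename_castSucc_mul_X_last_add {R : Type*} [CommRing R] [IsDomain R]
    [UniqueFactorizationMonoid R] {n : ℕ} {a c : MvPolynomial (Fin n) R} (ha : a ≠ 0)
    (hac : IsRelPrime a c) :
    Prime (rename Fin.castSucc a * X (Fin.last n) + rename Fin.castSucc c) := by
  let e : MvPolynomial (Fin (n + 1)) R ≃ₐ[R] Polynomial (MvPolynomial (Fin n) R) :=
    (renameEquiv R finSuccEquivLast).trans (optionEquivLeft R (Fin n))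
  have he : ∀ p, e (rename Fin.castSucc p) = Polynomial.C p := by
    intro p
    induction p using MvPolynomial.induction_on with
    | C r => simp only [e, AlgEquiv.trans_apply, renameEquiv_apply, rename_C, optionEquivLeft_C]
    | add p q hp hq => rw [map_add, map_add, hp, hq, Polynomial.C_add]
    | mul_X p i hp =>
      rw [map_mul, map_mul, hp, Polynomial.C_mul]
      simp only [e, AlgEquiv.trans_apply, renameEquiv_apply, rename_X, finSuccEquivLast_castSucc,
        optionEquivLeft_X_some]
  have heX : e (X (Fin.last n)) = Polynomial.X := by
    simp only [e, AlgEquiv.trans_apply, renameEquiv_apply, rename_X, finSuccEquivLast_last,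
      optionEquivLeft_X_none]
  rw [← UniqueFactorizationMonoid.irreducible_iff_prime, ← MulEquiv.irreducible_iff e, map_add,
    map_mul, he, he, heX]
  exact Polynomial.irreducible_C_mul_X_add_C ha hac

theorem RingHom.ker_eq_span_singleton_of_isLocalization_away {R S L F : Type*} [CommRing R]
    [CommRing S] [CommRing L] [FunLike F R S] [RingHomClass F R S] {p x : R} (hp : Prime p)
    (hpx : ¬ p ∣ x) (φ : F) (hφp : φ p = 0) [Algebra (R ⧸ Ideal.span {p}) L]
    [IsLocalization.Away (Ideal.Quotient.mk (Ideal.span {p}) x) L] (ψ : S →+* L)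
    (hψ : ∀ r, ψ (φ r) = algebraMap _ L (Ideal.Quotient.mk (Ideal.span {p}) r)) :
    RingHom.ker φ = Ideal.span {p} := by
  refine le_antisymm (fun f hf => ?_) ((Ideal.span_singleton_le_iff_mem _).2 hφp)
  have hf0 : algebraMap _ L (Ideal.Quotient.mk (Ideal.span {p}) f) = 0 := by
    rw [← hψ, RingHom.mem_ker.1 hf, map_zero]
  obtain ⟨⟨_, n, rfl⟩, hn⟩ :=
    (IsLocalization.map_eq_zero_iff (Submonoid.powers (Ideal.Quotient.mk _ x)) L _).1 hf0
  have hpdvd : p ∣ x ^ n * f := by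
    rw [← Ideal.mem_span_singleton, ← Ideal.Quotient.eq_zero_iff_mem, map_mul, map_pow]
    exact hn
  exact Ideal.mem_span_singleton.2 ((hp.dvd_or_dvd hpdvd).resolve_left (mt hp.dvd_of_dvd_pow hpx))

section Invariants

variable (R : Type*) [CommRing R]

noncomputable def invariantRelation : MvPolynomial (Fin 5) R :=
  X 0 ^ 3 * X 4 - X 1 ^ 3 * X 2 - X 0 ^ 2 * X 1 * X 3 ^ 2 + X 3 ^ 3

noncomputable def invariantEvaluation : MvPolynomial (Fin 5) R →ₐ[R] MvPolynomial (Fin 4) R :=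
  aeval ![X 0, X 3, X 1 ^ 3 + X 0 ^ 3 * X 2 - X 0 ^ 2 * X 1 ^ 2, X 1 * X 3, X 2 * X 3 ^ 3]

theorem invariantEvaluation_invariantRelation :
    invariantEvaluation R (invariantRelation R) = 0 := by
  simp only [invariantEvaluation, invariantRelation, map_add, map_sub, map_mul, map_pow, aeval_X,
    Matrix.cons_val, Matrix.cons_val_zero, Matrix.cons_val_one, Fin.isValue]
  ring

theorem invariantRelation_eq_rename_mul_X_last_add :
    invariantRelation R = rename Fin.castSucc (X 0 ^ 3) * X (Fin.last 4) +
      rename Fin.castSucc (X 3 ^ 3 - X 1 ^ 3 * X 2 - X 0 ^ 2 * X 1 * X 3 ^ 2) := by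
  simp only [invariantRelation, map_sub, map_mul, map_pow, rename_X, Fin.castSucc_zero,
    Fin.castSucc_one, Fin.reduceCastSucc, Fin.reduceLast, Fin.isValue, Nat.reduceAdd]
  ring

theorem invariantRelation_prime [IsDomain R] [UniqueFactorizationMonoid R] :
    Prime (invariantRelation R) := by
  have hc :
      ¬ (X 0 : MvPolynomial (Fin 4) R) ∣ X 3 ^ 3 - X 1 ^ 3 * X 2 - X 0 ^ 2 * X 1 * X 3 ^ 2 := by
    rintro ⟨g, hg⟩
    simpa using congrArg (eval ![0, 0, 0, 1]) hg
  rw [invariantRelation_eq_rename_mul_X_last_add]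
  exact prime_rename_castSucc_mul_X_last_add (pow_ne_zero _ (X_ne_zero _))
    (X_prime.irreducible.isRelPrime_iff_not_dvd.2 hc).pow_left

theorem invariantRelation_not_dvd_X_one [Nontrivial R] : ¬ invariantRelation R ∣ X 1 := by
  rintro ⟨g, hg⟩
  simpa [invariantRelation] using congrArg (eval ![0, 1, 0, 0, 0]) hg

theorem exists_invariantEvaluation_section :
    ∃ ψ : MvPolynomial (Fin 4) R →+*
        Localization.Away (Ideal.Quotient.mk (Ideal.span {invariantRelation R}) (X 1)),
      ∀ f, ψ (invariantEvaluation R f) =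
        algebraMap _ _ (Ideal.Quotient.mk (Ideal.span {invariantRelation R}) f) := by
  set I := Ideal.span {invariantRelation R}
  set L := Localization.Away (Ideal.Quotient.mk I (X 1))
  let x : Fin 5 → L := fun i => algebraMap _ L (Ideal.Quotient.mk I (X i))
  let w : L := IsLocalization.Away.invSelf (Ideal.Quotient.mk I (X 1))
  have hw : x 1 * w = 1 := IsLocalization.Away.mul_invSelf _
  have hrel : x 0 ^ 3 * x 4 - x 1 ^ 3 * x 2 - x 0 ^ 2 * x 1 * x 3 ^ 2 + x 3 ^ 3 = 0 := by
    have hP : Ideal.Quotient.mk I (invariantRelation R) = 0 :=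
      Ideal.Quotient.eq_zero_iff_mem.2 (Ideal.mem_span_singleton_self _)
    simpa [x, invariantRelation] using congrArg (algebraMap _ L) hP
  let ψ : MvPolynomial (Fin 4) R →ₐ[R] L := aeval ![x 0, x 3 * w, x 4 * w ^ 3, x 1]
  have hψ : ψ.comp (invariantEvaluation R) =
      (IsScalarTower.toAlgHom R _ L).comp (Ideal.Quotient.mkₐ R I) := by
    ext i
    fin_cases i <;>
      simp only [ψ, x, invariantEvaluation, AlgHom.coe_comp, Function.comp_apply, aeval_X,
        map_add, map_sub, map_mul, map_pow, Matrix.cons_val, Matrix.cons_val_zero,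
        Matrix.cons_val_one, IsScalarTower.coe_toAlgHom', Ideal.Quotient.mkₐ_eq_mk, Fin.isValue,
        Fin.zero_eta, Fin.mk_one, Fin.reduceFinMk]
    · linear_combination w ^ 3 * hrel
        + (x 2 * (1 + w * x 1 + w ^ 2 * x 1 ^ 2) + x 0 ^ 2 * x 3 ^ 2 * w ^ 2) * hw
    · linear_combination x 3 * hw
    · linear_combination x 4 * (w ^ 2 * x 1 ^ 2 + w * x 1 + 1) * hw
  exact ⟨ψ, fun f => congrArg (· f) hψ⟩

end Invariants

/-- For the `(ZMod 3)`-algebra map `φ : (ZMod 3)[X₀,…,X₄] → (ZMod 3)[A,B,C,D]` with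
`X₀ ↦ A`, `X₁ ↦ D`, `X₂ ↦ B³ + A³C − A²B²`, `X₃ ↦ B·D`, `X₄ ↦ C·D³`, the kernel of `φ`
is the principal ideal generated by `P = X₀³X₄ − X₁³X₂ − X₀²X₁X₃² + X₃³`. -/
theorem kernel_of_invariant_evaluation :
    RingHom.ker
      (MvPolynomial.aeval
        (R := ZMod 3)
        (![X 0, X 3, X 1 ^ 3 + X 0 ^ 3 * X 2 - X 0 ^ 2 * X 1 ^ 2, X 1 * X 3,
            X 2 * X 3 ^ 3] :
          Fin 5 → MvPolynomial (Fin 4) (ZMod 3)))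
      = Ideal.span {(X 0 ^ 3 * X 4 - X 1 ^ 3 * X 2 - X 0 ^ 2 * X 1 * X 3 ^ 2 + X 3 ^ 3 :
          MvPolynomial (Fin 5) (ZMod 3))} := by
  obtain ⟨ψ, hψ⟩ := exists_invariantEvaluation_section (ZMod 3)
  exact RingHom.ker_eq_span_singleton_of_isLocalization_away (invariantRelation_prime _)
    (invariantRelation_not_dvd_X_one _) (invariantEvaluation _)
    (invariantEvaluation_invariantRelation _) ψ hψ
end

section
/- Work in S = MvPolynomial (Fin 4) (ZMod 3) with variables A, B, C, D, and set S₁₂ = B³ + A³C − A²B². Let λ : ℕ⁴ → ZMod 3 be a finitely supported function such that every (a,b,c,e) in the support of λ has c ≤ 2. If A divides the polynomial Σ_{(a,b,c,e)} λ(a,b,c,e) · D^a · S₁₂^b · (B·D)^c · (C·D³)^e in S, then λ = 0. In particular, the monomials D^a S₁₂^b (BD)^c (CD³)^e with c ≤ 2 are linearly independent over ZMod 3 and no nonzero linear combination of them is divisible by A. -/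
open MvPolynomial

private noncomputable def nu (v : ℕ × ℕ × ℕ × ℕ) : Fin 4 →₀ ℕ :=
  Finsupp.single 1 (3 * v.2.1 + v.2.2.1) + Finsupp.single 2 v.2.2.2
    + Finsupp.single 3 (v.1 + v.2.2.1 + 3 * v.2.2.2)

private lemma nu_inj {v w : ℕ × ℕ × ℕ × ℕ} (hv : v.2.2.1 ≤ 2) (hw : w.2.2.1 ≤ 2)
    (h : nu v = nu w) : v = w := by
  obtain ⟨a, b, c, e⟩ := v
  obtain ⟨a', b', c', e'⟩ := w
  have hv' : c ≤ 2 := hv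
  have hw' : c' ≤ 2 := hw
  have h1 := DFunLike.congr_fun h 1
  have h2 := DFunLike.congr_fun h 2
  have h3 := DFunLike.congr_fun h 3
  simp only [nu, Finsupp.add_apply, Finsupp.single_eq_same,
    Finsupp.single_eq_of_ne (show (2 : Fin 4) ≠ 1 by decide),
    Finsupp.single_eq_of_ne (show (3 : Fin 4) ≠ 1 by decide),
    Finsupp.single_eq_of_ne (show (1 : Fin 4) ≠ 2 by decide),
    Finsupp.single_eq_of_ne (show (3 : Fin 4) ≠ 2 by decide),
    Finsupp.single_eq_of_ne (show (1 : Fin 4) ≠ 3 by decide),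
    Finsupp.single_eq_of_ne (show (2 : Fin 4) ≠ 3 by decide),
    add_zero, zero_add] at h1 h2 h3
  simp only [Prod.mk.injEq]
  omega

/-- In `(ZMod 3)[A,B,C,D]`, if a linear combination (over `ZMod 3`) of the monomials
`D^a · S₁₂^b · (BD)^c · (CD³)^e` with `c ≤ 2`, where `S₁₂ = B³ + A³C − A²B²`, is divisible
by `A`, then all its coefficients vanish. -/
theorem no_nonzero_combination_divisible_by_A
    (l : (ℕ × ℕ × ℕ × ℕ) →₀ ZMod 3)
    (hsupp : ∀ v ∈ l.support, v.2.2.1 ≤ 2)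
    (hdvd : (X 0 : MvPolynomial (Fin 4) (ZMod 3)) ∣
      l.sum (fun v coeff =>
        MvPolynomial.C coeff * (X 3) ^ v.1
          * (X 1 ^ 3 + X 0 ^ 3 * X 2 - X 0 ^ 2 * X 1 ^ 2) ^ v.2.1
          * (X 1 * X 3) ^ v.2.2.1
          * (X 2 * X 3 ^ 3) ^ v.2.2.2)) :
    l = 0 := by
  set φ : MvPolynomial (Fin 4) (ZMod 3) →ₐ[ZMod 3] MvPolynomial (Fin 4) (ZMod 3) :=
    aeval (fun i : Fin 4 => if i = 0 then 0 else X i) with hφ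
  obtain ⟨q, hq⟩ := hdvd
  have hφ0 : φ (X 0) = (0 : MvPolynomial (Fin 4) (ZMod 3)) := by simp [hφ]
  have hmap0 : φ (l.sum (fun v coeff =>
        MvPolynomial.C coeff * (X 3) ^ v.1
          * (X 1 ^ 3 + X 0 ^ 3 * X 2 - X 0 ^ 2 * X 1 ^ 2) ^ v.2.1
          * (X 1 * X 3) ^ v.2.2.1
          * (X 2 * X 3 ^ 3) ^ v.2.2.2)) = 0 := by
    rw [hq, map_mul, hφ0, zero_mul]
  have hmap : φ (l.sum (fun v coeff =>
        MvPolynomial.C coeff * (X 3) ^ v.1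
          * (X 1 ^ 3 + X 0 ^ 3 * X 2 - X 0 ^ 2 * X 1 ^ 2) ^ v.2.1
          * (X 1 * X 3) ^ v.2.2.1
          * (X 2 * X 3 ^ 3) ^ v.2.2.2))
      = l.sum (fun v coeff => monomial (nu v) coeff) := by
    rw [map_finsuppSum]
    refine Finsupp.sum_congr (fun v _ => ?_)
    have : φ (MvPolynomial.C (l v) * (X 3) ^ v.1
          * (X 1 ^ 3 + X 0 ^ 3 * X 2 - X 0 ^ 2 * X 1 ^ 2) ^ v.2.1
          * (X 1 * X 3) ^ v.2.2.1
          * (X 2 * X 3 ^ 3) ^ v.2.2.2)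
        = MvPolynomial.C (l v) * (X 3) ^ v.1 * (X 1 ^ 3) ^ v.2.1
          * (X 1 * X 3) ^ v.2.2.1 * (X 2 * X 3 ^ 3) ^ v.2.2.2 := by
      simp [hφ]
    rw [this]
    have e1 : ((X 1 : MvPolynomial (Fin 4) (ZMod 3)) ^ 3) ^ v.2.1 = X 1 ^ (3 * v.2.1) := by
      rw [← pow_mul]
    have e2 : ((X 1 : MvPolynomial (Fin 4) (ZMod 3)) * X 3) ^ v.2.2.1
        = X 1 ^ v.2.2.1 * X 3 ^ v.2.2.1 := mul_pow _ _ _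
    have e3 : ((X 2 : MvPolynomial (Fin 4) (ZMod 3)) * X 3 ^ 3) ^ v.2.2.2
        = X 2 ^ v.2.2.2 * X 3 ^ (3 * v.2.2.2) := by rw [mul_pow, ← pow_mul]
    rw [e1, e2, e3]
    have e4 : (MvPolynomial.C (l v) : MvPolynomial (Fin 4) (ZMod 3)) * X 3 ^ v.1 * X 1 ^ (3 * v.2.1)
        * (X 1 ^ v.2.2.1 * X 3 ^ v.2.2.1) * (X 2 ^ v.2.2.2 * X 3 ^ (3 * v.2.2.2))
        = MvPolynomial.C (l v) * X 1 ^ (3 * v.2.1 + v.2.2.1) * X 2 ^ v.2.2.2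
          * X 3 ^ (v.1 + v.2.2.1 + 3 * v.2.2.2) := by
      rw [pow_add, pow_add, pow_add]; ring
    refine e4.trans ?_
    rw [nu]
    simp only [X_pow_eq_monomial, C_mul_monomial, monomial_mul, mul_one]
  rw [hmap0] at hmap
  ext v
  by_cases hv : v ∈ l.support
  · have hc := congrArg (coeff (nu v)) hmap.symm
    rw [coeff_zero, Finsupp.sum, coeff_sum] at hc
    simp only [coeff_monomial] at hc
    rw [Finset.sum_eq_single_of_mem v hv] at hc
    · simpa using hc
    · intro w hw hne
      rw [if_neg]
      intro hnu
      exact hne (nu_inj (hsupp w hw) (hsupp v hv) hnu)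
  · simpa using Finsupp.notMem_support_iff.mp hv
end
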